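/- Let c > 0, 0 < ε ≤ x₀, and let t : [−ε, ε] → ℝ be differentiable. Suppose that for all x ∈ [−ε, ε]: −ε(2c + c²ε) < 1 − 2φ''(x)·t(x) < 0, −2ε(2c + c²ε) < t'(x) < 0, and √(1 + φ'(x)²) < 2·√(1 + φ'(0)²). Then for every x ∈ [−ε, ε] the Euclidean norm of d/dx W(x, t(x)) is at most 10·ε·(2c + c²ε)·(1 + φ'(0)²), and consequently the arclength of the curve x ↦ W(x, t(x)) over [−ε, ε] is at most 20·ε²·(2c + c²ε)·(1 + φ'(0)²). -/

import Mathlib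

/-- The Euclidean norm on `ℝ × ℝ`. -/
noncomputable def euclNorm (u : ℝ × ℝ) : ℝ := Real.sqrt (u.1 ^ 2 + u.2 ^ 2)

/-- `W(x,t) = (x, φ(x)) + t·(−2φ'(x), 1 − φ'(x)²)`. -/
noncomputable def Wmap (φ φ' : ℝ → ℝ) (x t : ℝ) : ℝ × ℝ :=
  (x, φ x) + t • (-2 * φ' x, 1 - (φ' x) ^ 2)

/-!
Along the curve `x ↦ W(x, t(x))` the velocity is
`(1 − 2φ''t)·(1, φ') + t'·(−2φ', 1 − φ'²)`, and the two direction vectors have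
Euclidean lengths `√(1 + φ'²)` and `1 + φ'²`. The hypotheses bound both coefficients by
multiples of `ε(2c + c²ε)` and `1 + φ'(x)²` by `4(1 + φ'(0)²)`, which gives the pointwise
bound on the speed; integrating it over an interval of length `2ε` bounds the arclength.
-/

lemma euclNorm_eq_norm_toLp (u : ℝ × ℝ) : euclNorm u = ‖WithLp.toLp 2 u‖ := by
  rw [WithLp.prod_norm_eq_of_L2]
  simp [euclNorm, Real.norm_eq_abs, sq_abs]

lemma euclNorm_nonneg (u : ℝ × ℝ) : 0 ≤ euclNorm u := Real.sqrt_nonneg _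

lemma euclNorm_add_le (u v : ℝ × ℝ) : euclNorm (u + v) ≤ euclNorm u + euclNorm v := by
  simp only [euclNorm_eq_norm_toLp, WithLp.toLp_add]
  exact norm_add_le _ _

lemma euclNorm_smul (r : ℝ) (u : ℝ × ℝ) : euclNorm (r • u) = |r| * euclNorm u := by
  simp only [euclNorm_eq_norm_toLp, WithLp.toLp_smul, norm_smul, Real.norm_eq_abs]

lemma euclNorm_one_mk (p : ℝ) : euclNorm (1, p) = Real.sqrt (1 + p ^ 2) := by
  simp [euclNorm]

lemma euclNorm_mk_neg_two_mul_one_sub_sq (p : ℝ) : euclNorm (-2 * p, 1 - p ^ 2) = 1 + p ^ 2 := by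
  rw [euclNorm, show (-2 * p) ^ 2 + (1 - p ^ 2) ^ 2 = (1 + p ^ 2) ^ 2 by ring,
    Real.sqrt_sq (by positivity)]

lemma hasDerivAt_Wmap_comp {φ φ' t : ℝ → ℝ} {φ'' t' x : ℝ}
    (hφ : HasDerivAt φ (φ' x) x) (hφ' : HasDerivAt φ' φ'' x) (ht : HasDerivAt t t' x) :
    HasDerivAt (fun s => Wmap φ φ' s (t s))
      ((1 - 2 * φ'' * t x) • ((1 : ℝ), φ' x) + t' • (-2 * φ' x, 1 - φ' x ^ 2)) x := by
  have hfst : HasDerivAt (fun s => s + t s * (-2 * φ' s))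
      (1 + (t' * (-2 * φ' x) + t x * (-2 * φ''))) x :=
    (hasDerivAt_id x).add (ht.mul (hφ'.const_mul (-2)))
  have hsnd : HasDerivAt (fun s => φ s + t s * (1 - φ' s ^ 2))
      (φ' x + (t' * (1 - φ' x ^ 2) + t x * -(2 * φ' x ^ 1 * φ''))) x :=
    hφ.add (ht.mul ((hφ'.pow 2).const_sub 1))
  convert hfst.prodMk hsnd using 1
  · funext s
    simp [Wmap, smul_eq_mul]
  · simp only [Prod.smul_mk, smul_eq_mul, Prod.mk_add_mk, Prod.ext_iff]
    constructor <;> ring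

lemma euclNorm_velocity_le {a b p q A : ℝ} (ha : |a| ≤ A) (hb : |b| ≤ 2 * A)
    (hpq : Real.sqrt (1 + p ^ 2) ≤ 2 * Real.sqrt (1 + q ^ 2)) :
    euclNorm (a • ((1 : ℝ), p) + b • (-2 * p, 1 - p ^ 2)) ≤ 10 * A * (1 + q ^ 2) := by
  have hA : 0 ≤ A := (abs_nonneg a).trans ha
  have hp : 1 + p ^ 2 ≤ 4 * (1 + q ^ 2) := by
    have := pow_le_pow_left₀ (Real.sqrt_nonneg _) hpq 2
    rw [mul_pow, Real.sq_sqrt (by positivity), Real.sq_sqrt (by positivity)] at this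
    linarith
  have hq : Real.sqrt (1 + q ^ 2) ≤ 1 + q ^ 2 :=
    Real.sqrt_le_self_iff.mpr (Or.inr (le_add_of_nonneg_right (sq_nonneg q)))
  calc euclNorm (a • ((1 : ℝ), p) + b • (-2 * p, 1 - p ^ 2))
      ≤ |a| * Real.sqrt (1 + p ^ 2) + |b| * (1 + p ^ 2) := by
        grw [euclNorm_add_le, euclNorm_smul, euclNorm_smul, euclNorm_one_mk, euclNorm_mk_neg_two_mul_one_sub_sq]
    _ ≤ A * (2 * Real.sqrt (1 + q ^ 2)) + 2 * A * (4 * (1 + q ^ 2)) := by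
        gcongr
    _ ≤ 10 * A * (1 + q ^ 2) := by nlinarith

lemma abs_le_of_neg_lt_of_neg {a A : ℝ} (hl : -A < a) (hr : a < 0) : |a| ≤ A := by
  rw [abs_of_neg hr]
  linarith

lemma intervalIntegral_le_of_le_const {f : ℝ → ℝ} {a b C : ℝ} (hab : a ≤ b)
    (hf : ∀ x ∈ Set.Icc a b, 0 ≤ f x ∧ f x ≤ C) :
    ∫ x in a..b, f x ≤ C * (b - a) := by
  have hbound : ∀ x ∈ Set.uIoc a b, ‖f x‖ ≤ C := fun x hx => by
    have hx' := Set.uIoc_subset_uIcc hx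
    rw [Set.uIcc_of_le hab] at hx'
    obtain ⟨hf0, hfC⟩ := hf x hx'
    rwa [Real.norm_eq_abs, abs_of_nonneg hf0]
  calc ∫ x in a..b, f x ≤ ‖∫ x in a..b, f x‖ := le_abs_self _
    _ ≤ C * |b - a| := intervalIntegral.norm_integral_le_of_norm_le_const hbound
    _ = C * (b - a) := by rw [abs_of_nonneg (sub_nonneg.mpr hab)]

theorem reflecting_curve_length_bound_general (x₀ ε c : ℝ) (hε : 0 < ε)
    (hεx₀ : ε ≤ x₀) (φ φ' φ'' t t' : ℝ → ℝ)
    (hφ : ∀ x ∈ Set.Icc (-x₀) x₀, HasDerivAt φ (φ' x) x)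
    (hφ' : ∀ x ∈ Set.Icc (-x₀) x₀, HasDerivAt φ' (φ'' x) x)
    (ht : ∀ x ∈ Set.Icc (-ε) ε, HasDerivAt t (t' x) x)
    (h1 : ∀ x ∈ Set.Icc (-ε) ε,
      -(ε * (2 * c + c ^ 2 * ε)) < 1 - 2 * φ'' x * t x ∧ 1 - 2 * φ'' x * t x < 0)
    (h2 : ∀ x ∈ Set.Icc (-ε) ε,
      -(2 * ε * (2 * c + c ^ 2 * ε)) < t' x ∧ t' x < 0)
    (h3 : ∀ x ∈ Set.Icc (-ε) ε,
      Real.sqrt (1 + (φ' x) ^ 2) < 2 * Real.sqrt (1 + (φ' 0) ^ 2)) :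
    (∀ x ∈ Set.Icc (-ε) ε,
      euclNorm (deriv (fun s => Wmap φ φ' s (t s)) x)
        ≤ 10 * ε * (2 * c + c ^ 2 * ε) * (1 + (φ' 0) ^ 2)) ∧
    (∫ x in (-ε)..ε, euclNorm (deriv (fun s => Wmap φ φ' s (t s)) x))
      ≤ 20 * ε ^ 2 * (2 * c + c ^ 2 * ε) * (1 + (φ' 0) ^ 2) := by
  have speed : ∀ x ∈ Set.Icc (-ε) ε,
      euclNorm (deriv (fun s => Wmap φ φ' s (t s)) x)
        ≤ 10 * ε * (2 * c + c ^ 2 * ε) * (1 + (φ' 0) ^ 2) := by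
    intro x hx
    have hx₀ : x ∈ Set.Icc (-x₀) x₀ := ⟨by linarith [hx.1], hx.2.trans hεx₀⟩
    rw [(hasDerivAt_Wmap_comp (hφ x hx₀) (hφ' x hx₀) (ht x hx)).deriv, mul_assoc 10 ε]
    refine euclNorm_velocity_le (abs_le_of_neg_lt_of_neg (h1 x hx).1 (h1 x hx).2) ?_ (h3 x hx).le
    simpa only [mul_assoc] using abs_le_of_neg_lt_of_neg (h2 x hx).1 (h2 x hx).2
  refine ⟨speed, ?_⟩
  calc (∫ x in (-ε)..ε, euclNorm (deriv (fun s => Wmap φ φ' s (t s)) x))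
      ≤ 10 * ε * (2 * c + c ^ 2 * ε) * (1 + (φ' 0) ^ 2) * (ε - -ε) :=
        intervalIntegral_le_of_le_const (by linarith)
          fun x hx => ⟨euclNorm_nonneg _, speed x hx⟩
    _ = 20 * ε ^ 2 * (2 * c + c ^ 2 * ε) * (1 + (φ' 0) ^ 2) := by ring

/-- Under the stated bounds, `‖d/dx W(x,t(x))‖ ≤ 10ε(2c + c²ε)(1 + φ'(0)²)` on `[−ε, ε]`,
and hence the arclength of the curve `x ↦ W(x, t(x))` is at most
`20ε²(2c + c²ε)(1 + φ'(0)²)`. -/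
theorem reflecting_curve_length_bound (x₀ ε c : ℝ) (hx₀ : 0 < x₀) (hε : 0 < ε)
    (hεx₀ : ε ≤ x₀) (hc : 0 < c) (φ φ' φ'' t t' : ℝ → ℝ)
    (hφ : ∀ x ∈ Set.Icc (-x₀) x₀, HasDerivAt φ (φ' x) x)
    (hφ' : ∀ x ∈ Set.Icc (-x₀) x₀, HasDerivAt φ' (φ'' x) x)
    (hφ''c : ContinuousOn φ'' (Set.Icc (-x₀) x₀))
    (ht : ∀ x ∈ Set.Icc (-ε) ε, HasDerivAt t (t' x) x)
    (h1 : ∀ x ∈ Set.Icc (-ε) ε,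
      -(ε * (2 * c + c ^ 2 * ε)) < 1 - 2 * φ'' x * t x ∧ 1 - 2 * φ'' x * t x < 0)
    (h2 : ∀ x ∈ Set.Icc (-ε) ε,
      -(2 * ε * (2 * c + c ^ 2 * ε)) < t' x ∧ t' x < 0)
    (h3 : ∀ x ∈ Set.Icc (-ε) ε,
      Real.sqrt (1 + (φ' x) ^ 2) < 2 * Real.sqrt (1 + (φ' 0) ^ 2)) :
    (∀ x ∈ Set.Icc (-ε) ε,
      euclNorm (deriv (fun s => Wmap φ φ' s (t s)) x)
        ≤ 10 * ε * (2 * c + c ^ 2 * ε) * (1 + (φ' 0) ^ 2)) ∧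
    (∫ x in (-ε)..ε, euclNorm (deriv (fun s => Wmap φ φ' s (t s)) x))
      ≤ 20 * ε ^ 2 * (2 * c + c ^ 2 * ε) * (1 + (φ' 0) ^ 2) :=
  reflecting_curve_length_bound_general x₀ ε c hε hεx₀ φ φ' φ'' t t' hφ hφ' ht h1 h2 h3
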